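/- arXiv:1007.3652 — 2 statements merged into one kernel-verified Lean document; each statement's English description precedes it below -/
import Mathlib

section
/- Let X be a reflexive Banach space, S, T : X ⇉ X* maximal monotone, p ∈ X, p* ∈ X*. If p* ∈ R(S(p + ·) + T(·)), then for all representative functions f_S ∈ F_S and f_T ∈ F_T one has dom f_S ∩ (dom f̂_T + (p, p*)) ≠ ∅ and the function f_S* □ (f̂_T* + ⟨(p*, p), (·, ·)⟩) is lower semicontinuous at (p*, p) and exact at (p*, p), with value ⟨p*, p⟩ there. -/
noncomputable section

open scoped Topology Pointwise

variable {X : Type*} [NormedAddCommGroup X] [NormedSpace ℝ X]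

/-- The topological dual of a real normed space. -/
abbrev Dd (X : Type*) [NormedAddCommGroup X] [NormedSpace ℝ X] := StrongDual ℝ X

/-- Convexity for extended-real-valued functions. -/
def EConvexOn {E : Type*} [AddCommMonoid E] [Module ℝ E] (f : E → EReal) : Prop :=
  ∀ x y : E, ∀ a b : ℝ, 0 ≤ a → 0 ≤ b → a + b = 1 →
    f (a • x + b • y) ≤ (a : EReal) * f x + (b : EReal) * f y

/-- Monotonicity of a multivalued operator `T : X ⇉ X*`. -/
def IsMonotoneOp (T : X → Set (Dd X)) : Prop :=
  ∀ ⦃x y xs ys⦄, xs ∈ T x → ys ∈ T y → 0 ≤ (ys - xs) (y - x)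

/-- Maximal monotonicity of a multivalued operator `T : X ⇉ X*`. -/
def IsMaxMonotone (T : X → Set (Dd X)) : Prop :=
  IsMonotoneOp T ∧ ∀ x xs, (∀ y ys, ys ∈ T y → 0 ≤ (xs - ys) (x - y)) → xs ∈ T x

/-- Fenchel conjugate of a function on `X × X*`, evaluated on `X* × X`
(the space `X` identified with its image in `X**`). -/
def conj2 (F : X × Dd X → EReal) : Dd X × X → EReal :=
  fun p => ⨆ q : X × Dd X, ((p.1 q.1 + q.2 p.2 : ℝ) : EReal) - F q

/-- Fenchel conjugate of a function on `X`. -/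
def conj1 (f : X → EReal) : Dd X → EReal :=
  fun xs => ⨆ x : X, ((xs x : ℝ) : EReal) - f x

/-- `F` is a representative function of `T`: convex, lower semicontinuous,
everywhere above the duality product and coinciding with it on the graph of `T`. -/
def IsRepr (T : X → Set (Dd X)) (F : X × Dd X → EReal) : Prop :=
  EConvexOn F ∧ LowerSemicontinuous F ∧
  (∀ p : X × Dd X, ((p.2 p.1 : ℝ) : EReal) ≤ F p) ∧
  (∀ p : X × Dd X, p.2 ∈ T p.1 → F p = ((p.2 p.1 : ℝ) : EReal))

/-- `f̂(x, x*) = f(x, -x*)`. -/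
def hatF (F : X × Dd X → EReal) : X × Dd X → EReal := fun p => F (p.1, -p.2)

/-- Effective domain. -/
def edom {E : Type*} (F : E → EReal) : Set E := {p | F p ≠ ⊤}

/-- Infimal convolution. -/
def infConv {E : Type*} [AddCommGroup E] (g h : E → EReal) : E → EReal :=
  fun y => ⨅ u : E, g (y - u) + h u

/-- Exactness of the infimal convolution at a point. -/
def ExactAt {E : Type*} [AddCommGroup E] (g h : E → EReal) (y : E) : Prop :=
  ∃ u : E, infConv g h y = g (y - u) + h u

/-- Convex subdifferential of an extended-real-valued function (empty where the
value is not finite). -/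
def esubdiff (h : X → EReal) (x : X) : Set (Dd X) :=
  {xs | h x ≠ ⊤ ∧ h x ≠ ⊥ ∧ ∀ y, h x + ((xs (y - x) : ℝ) : EReal) ≤ h y}

/-- Reflexivity of a normed space. -/
def Reflexive' (X : Type*) [NormedAddCommGroup X] [NormedSpace ℝ X] : Prop :=
  Function.Surjective (NormedSpace.inclusionInDoubleDual ℝ X)

/-- The Fitzpatrick function of `T`. -/
def fitz (T : X → Set (Dd X)) : X × Dd X → EReal :=
  fun p => ⨆ q : {q : X × Dd X // q.2 ∈ T q.1},
    ((q.1.2 p.1 + p.2 q.1.1 - q.1.2 q.1.1 : ℝ) : EReal)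

/-! Write `p* = s + t` with `s ∈ S (p + x₀)`, `t ∈ T x₀`, and put
`G q = f_S q + f̂_T (q - (p, p*))`. The conjugate of a sum lies below the infimal convolution
of the conjugates, so `G* ≤ f_S* □ (f̂_T* + ⟨(p*, p), ·⟩)` with `G*` lower semicontinuous; it
therefore suffices to squeeze both sides at `(p*, p)`. Testing `G*` at `(p + x₀, s)` gives
`⟨p*, p⟩ ≤ G*(p*, p)`. Splitting the infimal convolution at `(t, -x₀)` bounds it by
`⟨p*, p⟩`, because `F*(b, a) ≤ ⟨b, a⟩` for any representative `F` and `(a, b)` in the graph: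
by convexity along the segment to `(a, b)`, `F` majorizes the Fitzpatrick function. -/

open Set Filter Topology

lemma EReal.coe_add_sub_add_le_add {d₁ d₂ : ℝ} {a b g h : EReal} (hg : g ≠ ⊥) (hh : h ≠ ⊥)
    (h₁ : (d₁ : EReal) - a ≤ g) (h₂ : (d₂ : EReal) - b ≤ h) :
    ((d₁ + d₂ : ℝ) : EReal) - (a + b) ≤ g + h := by
  rcases eq_or_ne a ⊥ with rfl | ha
  · rw [EReal.coe_sub_bot, top_le_iff] at h₁
    simp [h₁, EReal.top_add_of_ne_bot hh]
  rcases eq_or_ne b ⊥ with rfl | hb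
  · rw [EReal.coe_sub_bot, top_le_iff] at h₂
    simp [h₂, EReal.add_top_of_ne_bot hg]
  refine EReal.sub_le_of_le_add ?_
  rw [EReal.coe_add, add_add_add_comm]
  exact add_le_add ((EReal.sub_le_iff_le_add (.inl ha) (.inr hg)).1 h₁)
    ((EReal.sub_le_iff_le_add (.inl hb) (.inr hh)).1 h₂)

lemma le_of_forall_mem_Ioo_le_add_mul {d m c : ℝ} (h : ∀ l ∈ Ioo (0 : ℝ) 1, d ≤ m + l * c) :
    d ≤ m := by
  have hlim : Tendsto (fun l : ℝ => m + l * c) (𝓝[>] 0) (𝓝 m) := by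
    have : Continuous fun l : ℝ => m + l * c := by fun_prop
    simpa using (this.tendsto 0).mono_left nhdsWithin_le_nhds
  exact ge_of_tendsto hlim (by filter_upwards [Ioo_mem_nhdsGT zero_lt_one] with l hl using h l hl)

lemma lowerSemicontinuous_coe_sub {α : Type*} [TopologicalSpace α] {f : α → ℝ}
    (hf : Continuous f) (c : EReal) : LowerSemicontinuous fun x => (f x : EReal) - c := by
  induction c using EReal.rec with
  | bot => simpa only [EReal.coe_sub_bot] using lowerSemicontinuous_const
  | coe r =>
    exact (continuous_coe_real_ereal.comp (hf.sub continuous_const)).lowerSemicontinuous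
  | top => simpa only [EReal.sub_top] using lowerSemicontinuous_const

lemma LowerSemicontinuousAt.of_le_of_apply_le {α β : Type*} [TopologicalSpace α] [Preorder β]
    {f g : α → β} {x : α} (hg : LowerSemicontinuousAt g x) (hgf : g ≤ f) (hfx : f x ≤ g x) :
    LowerSemicontinuousAt f x :=
  fun y hy => (hg y (hy.trans_le hfx)).mono fun _ hz => hz.trans_le (hgf _)

lemma EReal.sub_add_eq_add_sub (x c G : EReal) : x - G + c = x + c - G := by
  simp only [sub_eq_add_neg, add_right_comm]

lemma infConv_mono_right {E : Type*} [AddCommGroup E] (g : E → EReal) {h h' : E → EReal}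
    (hh : h ≤ h') : infConv g h ≤ infConv g h' :=
  fun y => iInf_mono fun u => by gcongr; exact hh u

lemma lowerSemicontinuous_conj2 (F : X × Dd X → EReal) : LowerSemicontinuous (conj2 F) :=
  lowerSemicontinuous_iSup fun q => lowerSemicontinuous_coe_sub (by fun_prop) (F q)

lemma conj2_ne_bot {F : X × Dd X → EReal} {q₀ : X × Dd X} (h₀ : F q₀ ≠ ⊤) (y : Dd X × X) :
    conj2 F y ≠ ⊥ := by
  refine ne_bot_of_le_ne_bot ?_
    (le_iSup (fun q : X × Dd X => ((y.1 q.1 + q.2 y.2 : ℝ) : EReal) - F q) q₀)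
  generalize F q₀ = c at h₀
  induction c using EReal.rec with
  | bot => simp
  | coe r => exact EReal.coe_ne_bot _
  | top => exact absurd rfl h₀

lemma conj2_hatF (F : X × Dd X → EReal) (u : Dd X × X) :
    conj2 (hatF F) u = conj2 F (u.1, -u.2) := by
  refine Eq.trans ?_ ((Equiv.refl X).prodCongr (Equiv.neg (Dd X))).iSup_comp
  exact iSup_congr fun q => by simp [hatF, Prod.map]

lemma conj2_comp_sub_le (H : X × Dd X → EReal) (a : X × Dd X) (u : Dd X × X) :
    conj2 (fun q => H (q - a)) u ≤ conj2 H u + ((a.2 u.2 + u.1 a.1 : ℝ) : EReal) := by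
  refine iSup_le fun q => ?_
  calc ((u.1 q.1 + q.2 u.2 : ℝ) : EReal) - H (q - a)
      = ((u.1 (q - a).1 + (q - a).2 u.2 : ℝ) : EReal) - H (q - a)
          + ((a.2 u.2 + u.1 a.1 : ℝ) : EReal) := by
        rw [EReal.sub_add_eq_add_sub, ← EReal.coe_add]
        congr 2
        simp only [Prod.fst_sub, Prod.snd_sub, map_sub, sub_apply]
        ring
    _ ≤ conj2 H u + ((a.2 u.2 + u.1 a.1 : ℝ) : EReal) := by
        gcongr
        exact le_iSup (fun r : X × Dd X => ((u.1 r.1 + r.2 u.2 : ℝ) : EReal) - H r) (q - a)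

lemma conj2_add_le_infConv {F H : X × Dd X → EReal} (hF : ∀ y, conj2 F y ≠ ⊥)
    (hH : ∀ y, conj2 H y ≠ ⊥) : conj2 (fun q => F q + H q) ≤ infConv (conj2 F) (conj2 H) := by
  refine fun y => le_iInf fun u => iSup_le fun q => ?_
  have h := EReal.coe_add_sub_add_le_add (hF (y - u)) (hH u)
    (le_iSup (fun r : X × Dd X => (((y - u).1 r.1 + r.2 (y - u).2 : ℝ) : EReal) - F r) q)
    (le_iSup (fun r : X × Dd X => ((u.1 r.1 + r.2 u.2 : ℝ) : EReal) - H r) q)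
  convert h using 3
  simp only [Prod.fst_sub, Prod.snd_sub, map_sub, sub_apply]
  ring

lemma conj2_add_comp_sub_le_infConv {F H : X × Dd X → EReal} {q₀ q₁ : X × Dd X}
    (hF : F q₀ ≠ ⊤) (hH : H q₁ ≠ ⊤) (a : X × Dd X) :
    conj2 (fun q => F q + H (q - a)) ≤
      infConv (conj2 F) (fun u => conj2 H u + ((a.2 u.2 + u.1 a.1 : ℝ) : EReal)) :=
  (conj2_add_le_infConv (conj2_ne_bot hF) (conj2_ne_bot (q₀ := q₁ + a) (by simpa using hH))).trans
    (infConv_mono_right _ (conj2_comp_sub_le H a))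

lemma le_apply_of_econvexOn_of_apply_eq {F : X × Dd X → EReal} (hconv : EConvexOn F)
    (hge : ∀ q : X × Dd X, ((q.2 q.1 : ℝ) : EReal) ≤ F q) {a : X} {b : Dd X}
    (hab : F (a, b) = b a) (q : X × Dd X) :
    ((b q.1 + q.2 a - b a : ℝ) : EReal) ≤ F q := by
  rcases eq_or_ne (F q) ⊤ with htop | htop
  · simp [htop]
  obtain ⟨m, hm⟩ : ∃ m : ℝ, F q = m :=
    ⟨_, (EReal.coe_toReal htop (ne_bot_of_le_ne_bot (EReal.coe_ne_bot _) (hge q))).symm⟩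
  rw [hm, EReal.coe_le_coe_iff]
  refine le_of_forall_mem_Ioo_le_add_mul (c := b q.1 + q.2 a - b a - q.2 q.1) fun l hl => ?_
  have hseg := (hge (l • q + (1 - l) • (a, b))).trans
    (hconv q (a, b) l (1 - l) hl.1.le (by linarith [hl.2]) (by ring))
  rw [hm, hab, ← EReal.coe_mul, ← EReal.coe_mul, ← EReal.coe_add, EReal.coe_le_coe_iff] at hseg
  simp only [Prod.fst_add, Prod.snd_add, Prod.smul_fst, Prod.smul_snd, map_add, map_smul,
    add_apply, smul_apply, smul_eq_mul] at hseg
  nlinarith [hl.1]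

lemma conj2_le_of_econvexOn_of_apply_eq {F : X × Dd X → EReal} (hconv : EConvexOn F)
    (hge : ∀ q : X × Dd X, ((q.2 q.1 : ℝ) : EReal) ≤ F q) {a : X} {b : Dd X}
    (hab : F (a, b) = b a) : conj2 F (b, a) ≤ b a := by
  refine iSup_le fun q => (EReal.sub_le_sub le_rfl
    (le_apply_of_econvexOn_of_apply_eq hconv hge hab q)).trans_eq ?_
  rw [← EReal.coe_sub]
  ring_nf

section SqueezeAtPoint

variable {FS FT : X × Dd X → EReal} {p x₀ : X} {s t : Dd X}

lemma le_conj2_add_comp_sub (hFS : FS (p + x₀, s) = s (p + x₀))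
    (hFT : hatF FT ((p + x₀, s) - (p, s + t)) = t x₀) :
    ((s + t) p : EReal) ≤ conj2 (fun q => FS q + hatF FT (q - (p, s + t))) (s + t, p) := by
  refine le_trans (le_of_eq ?_) (le_iSup _ (p + x₀, s))
  simp only [hFS, hFT, ← EReal.coe_add, ← EReal.coe_sub, map_add, add_apply]
  ring_nf

lemma conj2_sub_add_conj2_hatF_le (hFS : conj2 FS (s, p + x₀) ≤ s (p + x₀))
    (hFT : conj2 FT (t, x₀) ≤ t x₀) :
    conj2 FS ((s + t, p) - (t, -x₀))
      + (conj2 (hatF FT) (t, -x₀) + (((s + t) (-x₀) + t p : ℝ) : EReal)) ≤ (s + t) p := by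
  rw [conj2_hatF, neg_neg, show ((s + t, p) : Dd X × X) - (t, -x₀) = (s, p + x₀) by simp]
  calc conj2 FS (s, p + x₀) + (conj2 FT (t, x₀) + (((s + t) (-x₀) + t p : ℝ) : EReal))
      ≤ s (p + x₀) + (t x₀ + (((s + t) (-x₀) + t p : ℝ) : EReal)) := by gcongr
    _ = (s + t) p := by
      simp only [← EReal.coe_add, map_add, map_neg, add_apply]
      ring_nf

end SqueezeAtPoint

theorem infConv_lsc_exact_of_range_translate_general
    (S T : X → Set (Dd X))
    (p : X) (ps : Dd X)
    (hrange : ∃ x : X, ∃ s ∈ S (p + x), ∃ t ∈ T x, s + t = ps) :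
    ∀ FS FT : X × Dd X → EReal, IsRepr S FS → IsRepr T FT →
      (∃ q : X × Dd X, q ∈ edom FS ∧ q - (p, ps) ∈ edom (hatF FT)) ∧
      LowerSemicontinuousAt
        (infConv (conj2 FS)
          (fun u : Dd X × X => conj2 (hatF FT) u + ((ps u.2 + u.1 p : ℝ) : EReal))) (ps, p) ∧
      ExactAt (conj2 FS)
        (fun u : Dd X × X => conj2 (hatF FT) u + ((ps u.2 + u.1 p : ℝ) : EReal)) (ps, p) ∧
      infConv (conj2 FS)
        (fun u : Dd X × X => conj2 (hatF FT) u + ((ps u.2 + u.1 p : ℝ) : EReal)) (ps, p)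
        = ((ps p : ℝ) : EReal) := by
  obtain ⟨x₀, s, hs, t, ht, rfl⟩ := hrange
  rintro FS FT ⟨hconvS, -, hgeS, hgraphS⟩ ⟨hconvT, -, hgeT, hgraphT⟩
  have hFS : FS (p + x₀, s) = s (p + x₀) := hgraphS _ hs
  have hFT : hatF FT ((p + x₀, s) - (p, s + t)) = t x₀ := by
    simpa [hatF] using hgraphT _ ht
  have hdomS : FS (p + x₀, s) ≠ ⊤ := hFS ▸ EReal.coe_ne_top _
  have hdomT : hatF FT ((p + x₀, s) - (p, s + t)) ≠ ⊤ := hFT ▸ EReal.coe_ne_top _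
  have hG := conj2_add_comp_sub_le_infConv hdomS hdomT (p, s + t)
  have hlower := le_conj2_add_comp_sub hFS hFT
  have hupper := conj2_sub_add_conj2_hatF_le (conj2_le_of_econvexOn_of_apply_eq hconvS hgeS hFS)
    (conj2_le_of_econvexOn_of_apply_eq hconvT hgeT (hgraphT _ ht))
  have hval : infConv (conj2 FS) _ (s + t, p) = ((s + t) p : EReal) :=
    le_antisymm ((iInf_le _ (t, -x₀)).trans hupper) (hlower.trans (hG _))
  refine ⟨⟨(p + x₀, s), hdomS, hdomT⟩, ?_,
    ⟨(t, -x₀), le_antisymm (iInf_le _ _) (hupper.trans hval.ge)⟩, hval⟩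
  exact LowerSemicontinuousAt.of_le_of_apply_le (lowerSemicontinuous_conj2 _ _) hG
    (hval.le.trans hlower)

/-- necessity (i) ⇒ (ii) of Theorem 3, with the value `⟨p*, p⟩`. -/
theorem infConv_lsc_exact_of_range_translate [CompleteSpace X] (hX : Reflexive' X)
    (S T : X → Set (Dd X)) (hS : IsMaxMonotone S) (hT : IsMaxMonotone T)
    (p : X) (ps : Dd X)
    (hrange : ∃ x : X, ∃ s ∈ S (p + x), ∃ t ∈ T x, s + t = ps) :
    ∀ FS FT : X × Dd X → EReal, IsRepr S FS → IsRepr T FT →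
      (∃ q : X × Dd X, q ∈ edom FS ∧ q - (p, ps) ∈ edom (hatF FT)) ∧
      LowerSemicontinuousAt
        (infConv (conj2 FS)
          (fun u : Dd X × X => conj2 (hatF FT) u + ((ps u.2 + u.1 p : ℝ) : EReal))) (ps, p) ∧
      ExactAt (conj2 FS)
        (fun u : Dd X × X => conj2 (hatF FT) u + ((ps u.2 + u.1 p : ℝ) : EReal)) (ps, p) ∧
      infConv (conj2 FS)
        (fun u : Dd X × X => conj2 (hatF FT) u + ((ps u.2 + u.1 p : ℝ) : EReal)) (ps, p)
        = ((ps p : ℝ) : EReal) :=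
  infConv_lsc_exact_of_range_translate_general S T p ps hrange
end
end

section
/- Let X be a reflexive Banach space, S : X ⇉ X* maximal monotone, and g : X → ℝ ∪ {+∞} proper convex lower semicontinuous such that both g and g* are everywhere real-valued. Then for every p ∈ X the operator x ↦ S(p + x) + ∂g(x) is surjective. -/
noncomputable section

open scoped Topology Pointwise

variable {X : Type*} [NormedAddCommGroup X] [NormedSpace ℝ X]

/-!
Replacing `S` by `x ↦ S (p + x) - ps` reduces the claim to `0 ∈ S z + ∂g z`. Write `f` for the
real-valued `g`; `f` and `f*` are continuous by Baire's theorem. On `X* × X` the concave continuous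
function `(u, v) ↦ -(f* (-u) + f v)` lies below the duality product, hence below the conjugate `F*`
of the Fitzpatrick function `F` of `S`, and `F*` is convex. A continuous affine function squeezed
between them is, by reflexivity, of the form `(u, v) ↦ u a + ψ v + c`. Since `f = f**`, the lower
inequality gives `f a ≤ f v + ψ v + c` for all `v`, so `-c ≤ ψ a`; the upper one, on the graph
of `S`, gives `F (a, ψ) ≤ -c`. As `ψ a ≤ F (a, ψ)` by maximality, `ψ a = -c = F (a, ψ)`, whence
`ψ ∈ S a` and `-ψ ∈ ∂f a`.
-/

open Set Filter

section ConvexAnalysis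

variable {E : Type*} [NormedAddCommGroup E] [NormedSpace ℝ E]

theorem ConvexOn.continuous_of_lowerSemicontinuous [BaireSpace E] {f : E → ℝ}
    (hf : ConvexOn ℝ univ f) (hfl : LowerSemicontinuous f) : Continuous f := by
  obtain ⟨n, x₀, hx₀⟩ := nonempty_interior_of_iUnion_of_closed
    (fun n : ℕ => hfl.isClosed_preimage (n : ℝ))
    (iUnion_eq_univ_iff.2 fun x => exists_nat_ge (f x))
  have hbdd : (𝓝 x₀).IsBoundedUnder (· ≤ ·) f :=
    isBoundedUnder_of_eventually_le (a := (n : ℝ))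
      (mem_of_superset (isOpen_interior.mem_nhds hx₀) interior_subset)
  have h := (hf.continuousOn_tfae isOpen_univ univ_nonempty).out 3 1
  exact continuousOn_univ.1 (h.1 ⟨x₀, mem_univ _, hbdd⟩)

/-- The Fenchel conjugate `f*`; a real `⨆`, so it is junk (`0`) at `u` unless
`x ↦ u x - f x` is bounded above. -/
def fenchelConj (f : E → ℝ) (u : StrongDual ℝ E) : ℝ := ⨆ x, u x - f x

variable {f : E → ℝ}

theorem sub_le_fenchelConj {u : StrongDual ℝ E} (hu : BddAbove (range fun x => u x - f x))
    (x : E) : u x - f x ≤ fenchelConj f u :=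
  le_ciSup hu x

theorem fenchelConj_le {u : StrongDual ℝ E} {c : ℝ} (h : ∀ x, u x - f x ≤ c) :
    fenchelConj f u ≤ c :=
  ciSup_le h

theorem convexOn_fenchelConj (hbdd : ∀ u : StrongDual ℝ E, BddAbove (range fun x => u x - f x)) :
    ConvexOn ℝ univ (fenchelConj f) := by
  refine ⟨convex_univ, fun u _ v _ a b ha hb hab => fenchelConj_le fun x => ?_⟩
  have hu := mul_le_mul_of_nonneg_left (sub_le_fenchelConj (hbdd u) x) ha
  have hv := mul_le_mul_of_nonneg_left (sub_le_fenchelConj (hbdd v) x) hb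
  have hx : f x = a * f x + b * f x := by rw [← add_mul, hab, one_mul]
  simp only [add_apply, smul_apply, smul_eq_mul]
  linarith

theorem continuous_fenchelConj
    (hbdd : ∀ u : StrongDual ℝ E, BddAbove (range fun x => u x - f x)) :
    Continuous (fenchelConj f) :=
  (convexOn_fenchelConj hbdd).continuous_of_lowerSemicontinuous <|
    lowerSemicontinuous_ciSup hbdd fun x =>
      ((ContinuousLinearMap.apply ℝ ℝ x).continuous.sub continuous_const).lowerSemicontinuous

theorem exists_lt_sub_fenchelConj (hf : ConvexOn ℝ univ f) (hfl : LowerSemicontinuous f)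
    {r : ℝ} {x : E} (hr : r < f x) : ∃ u : StrongDual ℝ E, r ≤ u x - fenchelConj f u := by
  obtain ⟨l, c, hle, hlx⟩ := hf.exists_affine_le_of_lt (𝕜 := ℝ) (mem_univ x) hr isClosed_univ
    (hfl.lowerSemicontinuousOn univ)
  have hl : fenchelConj f l ≤ -c := fenchelConj_le fun y => by
    have := hle ⟨y, mem_univ y⟩
    simp only [Pi.add_apply, domRestrict_apply, Function.comp_apply, RCLike.re_to_real,
      Function.const_apply] at this
    linarith
  rw [RCLike.re_to_real] at hlx
  exact ⟨l, by linarith⟩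

end ConvexAnalysis

section Sandwich

variable {E : Type*} [AddCommGroup E] [Module ℝ E]

theorem convex_setOf_coe_sub_le (ℓ : E →ₗ[ℝ] ℝ) (b : EReal) :
    Convex ℝ {p : E × ℝ | ((ℓ p.1 : ℝ) : EReal) - b ≤ p.2} := by
  induction b using EReal.rec with
  | bot => simpa using convex_empty
  | top => simpa using convex_univ
  | coe r =>
    have : {p : E × ℝ | ((ℓ p.1 : ℝ) : EReal) - r ≤ p.2} =
        {p | (ℓ.comp (LinearMap.fst ℝ E ℝ) - LinearMap.snd ℝ E ℝ) p ≤ r} := by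
      ext p
      simp [← EReal.coe_sub, add_comm]
    rw [this]
    exact convex_halfSpace_le (LinearMap.isLinear _) r

theorem convex_epigraph_iSup_coe_sub {ι : Type*} (ℓ : ι → E →ₗ[ℝ] ℝ) (b : ι → EReal) :
    Convex ℝ {p : E × ℝ | ⨆ i, ((ℓ i p.1 : ℝ) : EReal) - b i ≤ p.2} := by
  simp only [iSup_le_iff, ofPred_forall]
  exact convex_iInter fun i => convex_setOf_coe_sub_le (ℓ i) (b i)

variable [TopologicalSpace E] [IsTopologicalAddGroup E] [ContinuousSMul ℝ E]

theorem exists_affine_between {g : E → ℝ} {A : E → EReal} (hg : ConcaveOn ℝ univ g)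
    (hgc : Continuous g) (hA : Convex ℝ {p : E × ℝ | A p.1 ≤ p.2})
    (hA' : {p : E × ℝ | A p.1 ≤ p.2}.Nonempty) (hgA : ∀ w, (g w : EReal) ≤ A w) :
    ∃ (φ : StrongDual ℝ E) (c : ℝ), ∀ w, g w ≤ φ w + c ∧ ((φ w + c : ℝ) : EReal) ≤ A w := by
  have hU : Convex ℝ {p : E × ℝ | p.2 < g p.1} := by
    simpa only [mem_univ, true_and] using hg.convex_strict_hypograph
  have hdisj : Disjoint {p : E × ℝ | p.2 < g p.1} {p : E × ℝ | A p.1 ≤ p.2} :=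
    disjoint_left.2 fun p hpU hpV =>
      (EReal.coe_lt_coe_iff.2 hpU).not_ge ((hgA p.1).trans hpV)
  obtain ⟨L, u, hLU, hLV⟩ := geometric_hahn_banach_open hU
    (isOpen_lt continuous_snd (hgc.comp continuous_fst)) hA hdisj
  set s := L (0, 1)
  have hL : ∀ w t, L (w, t) = L (w, 0) + t * s := fun w t => by
    rw [← smul_eq_mul, ← map_smul, ← map_add]; simp
  obtain ⟨⟨w₀, t₀⟩, h₀⟩ := hA'
  -- the vertical line through `w₀` meets the hypograph below the epigraph
  have hs : 0 < s := by
    have h₁ := hLU (w₀, g w₀ - 1) (by simp)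
    have h₂ := hLV _ h₀
    have : g w₀ ≤ t₀ := EReal.coe_le_coe_iff.1 ((hgA w₀).trans h₀)
    rw [hL] at h₁ h₂
    nlinarith
  set φ : StrongDual ℝ E := -(s⁻¹ • L.comp (.inl ℝ E ℝ))
  have hφ : ∀ w, φ w + u / s = (u - L (w, 0)) / s := fun w => by
    simp only [φ, neg_apply, smul_apply, ContinuousLinearMap.comp_apply,
      ContinuousLinearMap.inl_apply, smul_eq_mul]
    field_simp
    ring
  refine ⟨φ, u / s, fun w => ⟨le_of_forall_lt fun t ht => ?_, ?_⟩⟩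
  · have := hLU (w, t) ht
    rw [hL] at this
    rw [hφ, lt_div_iff₀ hs]
    linarith
  · by_contra! h
    obtain ⟨t, hAt, htφ⟩ := EReal.lt_iff_exists_real_btwn.1 h
    have := hLV (w, t) hAt.le
    rw [hL] at this
    rw [EReal.coe_lt_coe_iff, hφ, lt_div_iff₀ hs] at htφ
    linarith

end Sandwich

section Fitzpatrick

variable {S : X → Set (Dd X)}

theorem sub_apply_sub (xs ys : Dd X) (x y : X) :
    (xs - ys) (x - y) = xs x - xs y - ys x + ys y := by
  simp only [sub_apply, map_sub]
  ring

theorem IsMaxMonotone.exists_apply_sub_nonpos (hS : IsMaxMonotone S) (x : X) (xs : Dd X) :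
    ∃ y, ∃ ys ∈ S y, (xs - ys) (x - y) ≤ 0 := by
  by_contra! h
  simpa using h x xs (hS.2 x xs fun y ys hy => (h y ys hy).le)

theorem IsMaxMonotone.translate (hS : IsMaxMonotone S) (p : X) (ps : Dd X) :
    IsMaxMonotone fun x => {s | s + ps ∈ S (p + x)} := by
  refine ⟨fun x y xs ys hx hy => ?_, fun x xs h => hS.2 _ _ fun y ys hy => ?_⟩
  · simpa using hS.1 hx hy
  · have := h (y - p) (ys - ps) (by simpa using hy)
    rwa [sub_sub_eq_add_sub, sub_sub_eq_add_sub, add_comm x p] at this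

theorem le_fitz {q : X × Dd X} (hq : q.2 ∈ S q.1) (p : X × Dd X) :
    ((q.2 p.1 + p.2 q.1 - q.2 q.1 : ℝ) : EReal) ≤ fitz S p :=
  le_iSup (fun q : {q : X × Dd X // q.2 ∈ S q.1} =>
    ((q.1.2 p.1 + p.2 q.1.1 - q.1.2 q.1.1 : ℝ) : EReal)) ⟨q, hq⟩

theorem fitz_le {p : X × Dd X} {c : ℝ}
    (h : ∀ q : X × Dd X, q.2 ∈ S q.1 → q.2 p.1 + p.2 q.1 - q.2 q.1 ≤ c) : fitz S p ≤ c :=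
  iSup_le fun q => EReal.coe_le_coe_iff.2 (h q.1 q.2)

theorem IsMaxMonotone.apply_le_fitz (hS : IsMaxMonotone S) (p : X × Dd X) :
    ((p.2 p.1 : ℝ) : EReal) ≤ fitz S p := by
  obtain ⟨y, ys, hy, hneg⟩ := hS.exists_apply_sub_nonpos p.1 p.2
  refine le_trans ?_ (le_fitz (q := (y, ys)) hy p)
  rw [sub_apply_sub] at hneg
  exact EReal.coe_le_coe_iff.2 (by linarith)

theorem IsMonotoneOp.fitz_le_apply (hS : IsMonotoneOp S) {q : X × Dd X} (hq : q.2 ∈ S q.1) :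
    fitz S q ≤ q.2 q.1 :=
  fitz_le fun r hr => by
    have := hS hr hq
    rw [sub_apply_sub] at this
    linarith

theorem IsMaxMonotone.mem_of_fitz_le_apply (hS : IsMaxMonotone S) {p : X × Dd X}
    (h : fitz S p ≤ p.2 p.1) : p.2 ∈ S p.1 :=
  hS.2 _ _ fun y ys hy => by
    have := EReal.coe_le_coe_iff.1 ((le_fitz (q := (y, ys)) hy p).trans h)
    rw [sub_apply_sub]
    linarith

theorem sub_le_conj2 (F : X × Dd X → EReal) (ω : Dd X × X) (q : X × Dd X) :
    ((ω.1 q.1 + q.2 ω.2 : ℝ) : EReal) - F q ≤ conj2 F ω :=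
  le_iSup (fun q : X × Dd X => ((ω.1 q.1 + q.2 ω.2 : ℝ) : EReal) - F q) q

theorem convex_epigraph_conj2 (F : X × Dd X → EReal) :
    Convex ℝ {p : (Dd X × X) × ℝ | conj2 F p.1 ≤ p.2} := by
  exact convex_epigraph_iSup_coe_sub (E := Dd X × X) (fun q : X × Dd X =>
    IsLinearMap.mk' (fun ω : Dd X × X => ω.1 q.1 + q.2 ω.2)
      ⟨fun ω ω' => by simp only [Prod.fst_add, Prod.snd_add, add_apply, map_add]; ring,
        fun a ω => by
          simp only [Prod.smul_fst, Prod.smul_snd, smul_apply, map_smul, smul_eq_mul]; ring⟩) F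

theorem conj2_fitz_le_apply {y : X} {ys : Dd X} (hy : ys ∈ S y) :
    conj2 (fitz S) (ys, y) ≤ ys y :=
  iSup_le fun q => EReal.sub_le_of_le_add <| by
    have := add_le_add_left (le_fitz (q := (y, ys)) hy q) ((ys y : ℝ) : EReal)
    dsimp only at this ⊢
    rwa [← EReal.coe_add, sub_add_cancel, add_comm (fitz S q)] at this

theorem IsMaxMonotone.apply_le_conj2_fitz (hS : IsMaxMonotone S) (ω : Dd X × X) :
    ((ω.1 ω.2 : ℝ) : EReal) ≤ conj2 (fitz S) ω := by
  obtain ⟨y, ys, hy, hneg⟩ := hS.exists_apply_sub_nonpos ω.2 ω.1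
  refine le_trans ?_ (sub_le_conj2 _ ω (y, ys))
  refine le_trans ?_ (EReal.sub_le_sub le_rfl (hS.1.fitz_le_apply (q := (y, ys)) hy))
  rw [sub_apply_sub] at hneg
  exact EReal.coe_le_coe_iff.2 (by dsimp only; linarith)

end Fitzpatrick

section RealValued

theorem LowerSemicontinuous.of_coe {α : Type*} [TopologicalSpace α] {f : α → ℝ}
    (h : LowerSemicontinuous fun x => (f x : EReal)) : LowerSemicontinuous f :=
  fun x r hr => (h x r (EReal.coe_lt_coe_iff.2 hr)).mono fun _ => EReal.coe_lt_coe_iff.1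

variable {f : X → ℝ}

theorem EConvexOn.convexOn_of_coe (h : EConvexOn fun x => (f x : EReal)) :
    ConvexOn ℝ univ f :=
  ⟨convex_univ, fun x _ y _ a b ha hb hab => by
    simpa only [← EReal.coe_mul, ← EReal.coe_add, EReal.coe_le_coe_iff, smul_eq_mul]
      using h x y a b ha hb hab⟩

theorem bddAbove_range_sub_of_conj1_ne_top {u : Dd X}
    (h : conj1 (fun x => (f x : EReal)) u ≠ ⊤) : BddAbove (range fun x => u x - f x) :=
  ⟨_, forall_mem_range.2 fun x => EReal.coe_le_coe_iff.1 <|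
    (le_iSup (fun x => ((u x : ℝ) : EReal) - f x) x).trans (EReal.le_coe_toReal h)⟩

theorem mem_esubdiff_coe_iff {x : X} {xs : Dd X} :
    xs ∈ esubdiff (fun x => (f x : EReal)) x ↔ ∀ y, f x + xs (y - x) ≤ f y := by
  simp only [esubdiff, mem_ofPred_eq, EReal.coe_ne_top, EReal.coe_ne_bot, ne_eq, not_false_eq_true,
    true_and, ← EReal.coe_add, EReal.coe_le_coe_iff]

end RealValued

section Surjectivity

variable [CompleteSpace X] {S : X → Set (Dd X)} {f : X → ℝ}

theorem IsMaxMonotone.exists_affine_separation (hX : Reflexive' X) (hS : IsMaxMonotone S)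
    (hf : ConvexOn ℝ univ f) (hfl : LowerSemicontinuous f)
    (hbdd : ∀ u : Dd X, BddAbove (range fun x => u x - f x)) :
    ∃ (a : X) (ψ : Dd X) (c : ℝ), (∀ u v, -(fenchelConj f (-u) + f v) ≤ u a + ψ v + c) ∧
      ∀ y, ∀ ys ∈ S y, ys a + ψ y + c ≤ ys y := by
  set B : Dd X × X → ℝ := fun ω => fenchelConj f (-ω.1) + f ω.2
  have hB : ConvexOn ℝ univ B :=
    ((convexOn_fenchelConj hbdd).comp_linearMap (-LinearMap.fst ℝ (Dd X) X)).add
      (hf.comp_linearMap (LinearMap.snd ℝ (Dd X) X))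
  have hBc : Continuous B := ((continuous_fenchelConj hbdd).comp continuous_fst.neg).add
    ((hf.continuous_of_lowerSemicontinuous hfl).comp continuous_snd)
  have hBA : ∀ ω, ((-B ω : ℝ) : EReal) ≤ conj2 (fitz S) ω := fun ω => by
    refine le_trans (EReal.coe_le_coe_iff.2 ?_) (hS.apply_le_conj2_fitz ω)
    have := sub_le_fenchelConj (hbdd (-ω.1)) ω.2
    simp only [neg_apply] at this
    linarith
  obtain ⟨y₀, ys₀, hy₀, -⟩ := hS.exists_apply_sub_nonpos 0 0
  obtain ⟨φ, c, hφ⟩ := exists_affine_between hB.neg hBc.neg (convex_epigraph_conj2 _)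
    ⟨((ys₀, y₀), ys₀ y₀), conj2_fitz_le_apply hy₀⟩ hBA
  obtain ⟨a, ha⟩ := hX (φ.comp (.inl ℝ (Dd X) X))
  set ψ := φ.comp (.inr ℝ (Dd X) X)
  have hφ' : ∀ u v, φ (u, v) = u a + ψ v := fun u v => by
    have hu : φ (u, 0) = u a := by rw [← NormedSpace.dual_def ℝ X a u, ha]; rfl
    rw [← hu]
    change φ (u, v) = φ (u, 0) + φ (0, v)
    rw [← map_add, Prod.mk_add_mk, add_zero, zero_add]
  refine ⟨a, ψ, c, fun u v => ?_, fun y ys hy => ?_⟩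
  · have := (hφ (u, v)).1
    rw [hφ'] at this
    exact this
  · have := (hφ (ys, y)).2.trans (conj2_fitz_le_apply hy)
    rw [hφ'] at this
    exact_mod_cast this

theorem IsMaxMonotone.exists_neg_mem_esubdiff (hX : Reflexive' X) (hS : IsMaxMonotone S)
    (hf : ConvexOn ℝ univ f) (hfl : LowerSemicontinuous f)
    (hbdd : ∀ u : Dd X, BddAbove (range fun x => u x - f x)) :
    ∃ z, ∃ zs ∈ S z, -zs ∈ esubdiff (fun x => (f x : EReal)) z := by
  obtain ⟨a, ψ, c, h₁, h₂⟩ := hS.exists_affine_separation hX hf hfl hbdd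
  have hmin : ∀ v, f a ≤ f v + ψ v + c := fun v => le_of_forall_lt_imp_le_of_dense fun r hr => by
    obtain ⟨u, hu⟩ := exists_lt_sub_fenchelConj hf hfl hr
    have := h₁ (-u) v
    simp only [neg_neg, neg_apply] at this
    linarith
  have hfitz : fitz S (a, ψ) ≤ (-c : ℝ) := fitz_le fun q hq => by
    have := h₂ q.1 q.2 hq
    dsimp only
    linarith
  have hψa : ψ a = -c := le_antisymm
    (EReal.coe_le_coe_iff.1 ((hS.apply_le_fitz (a, ψ)).trans hfitz)) (by linarith [hmin a])
  refine ⟨a, ψ, hS.mem_of_fitz_le_apply (hfitz.trans_eq (by rw [← hψa])), ?_⟩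
  refine mem_esubdiff_coe_iff.2 fun y => ?_
  rw [neg_apply, map_sub, hψa]
  linarith [hmin y]

end Surjectivity

/-- if `g` and `g*` are everywhere real-valued (with `g` proper convex lsc),
then `S(p + ·) + ∂g(·)` is surjective for every `p`. -/
theorem surjective_translate_add_subdiff [CompleteSpace X] (hX : Reflexive' X)
    (S : X → Set (Dd X)) (hS : IsMaxMonotone S)
    (g : X → EReal) (hgc : EConvexOn g) (hgl : LowerSemicontinuous g)
    (hgreal : ∀ x, g x ≠ ⊤ ∧ g x ≠ ⊥)
    (hgconjreal : ∀ xs : Dd X, conj1 g xs ≠ ⊤ ∧ conj1 g xs ≠ ⊥) :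
    ∀ (p : X) (ps : Dd X), ∃ x : X, ∃ s ∈ S (p + x), ∃ t ∈ esubdiff g x, s + t = ps := by
  intro p ps
  obtain ⟨f, rfl⟩ : ∃ f : X → ℝ, g = fun x => (f x : EReal) :=
    ⟨fun x => (g x).toReal, funext fun x => (EReal.coe_toReal (hgreal x).1 (hgreal x).2).symm⟩
  obtain ⟨x, s, hs, ht⟩ := (hS.translate p ps).exists_neg_mem_esubdiff hX hgc.convexOn_of_coe
    hgl.of_coe fun u => bddAbove_range_sub_of_conj1_ne_top (hgconjreal u).1
  exact ⟨x, s + ps, hs, -s, ht, by abel⟩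
end
end
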